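/- Vectors s₁, …, s_m ∈ ℝⁿ form an n-dimensional eutactic star of scale s (i.e., they are the images of √s·e₁, …, √s·e_m under an orthogonal projection from ℝ^m onto an n-dimensional subspace) if and only if for every w ∈ ℝⁿ, ∑_{i=1}^m ⟨w, s_i⟩² = s·⟨w, w⟩. -/

import Mathlib

open scoped RealInnerProductSpace

/-!
Writing `e i` for the standard basis of `ℓ²(ι)`, the vectors `f† (e i)` of a linear map
`f : E → ℓ²(ι)` are exactly the vectors `v i` whose analysis map `w ↦ (⟪v i, w⟫)ᵢ` is `f`,
since `⟪w, f† (e i)⟫ = (f w) i`. So `v i = f† (e i)` for an isometry `f` if and only if the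
analysis map of `v` preserves norms, i.e. `∑ i, ⟪w, v i⟫² = ‖w‖²`. The scale `s` is absorbed
by replacing `v` with `(√s)⁻¹ • v`.
-/

namespace EuclideanSpace

variable {ι E : Type*} [NormedAddCommGroup E] [InnerProductSpace ℝ E]

def analysisMap (v : ι → E) : E →ₗ[ℝ] EuclideanSpace ℝ ι where
  toFun w := WithLp.toLp 2 fun i => ⟪v i, w⟫
  map_add' x y := by ext i; simp [inner_add_right]
  map_smul' r x := by ext i; simp [inner_smul_right]

@[simp]
theorem analysisMap_apply (v : ι → E) (w : E) (i : ι) : analysisMap v w i = ⟪v i, w⟫ := rfl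

variable [Fintype ι]

theorem norm_analysisMap_sq (v : ι → E) (w : E) :
    ‖analysisMap v w‖ ^ 2 = ∑ i, ⟪w, v i⟫ ^ 2 := by
  simp [real_norm_sq_eq, real_inner_comm]

variable [DecidableEq ι] [FiniteDimensional ℝ E]

theorem inner_adjoint_single_one (f : E →ₗ[ℝ] EuclideanSpace ℝ ι) (w : E) (i : ι) :
    ⟪w, LinearMap.adjoint f (single i 1)⟫ = f w i := by
  simp [LinearMap.adjoint_inner_right, inner_single_right]

theorem adjoint_analysisMap_single_one (v : ι → E) (i : ι) :
    LinearMap.adjoint (analysisMap v) (single i 1) = v i :=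
  ext_inner_left ℝ fun w => by rw [inner_adjoint_single_one, analysisMap_apply, real_inner_comm]

theorem analysisMap_adjoint_single_one (f : E →ₗ[ℝ] EuclideanSpace ℝ ι) :
    analysisMap (fun i => LinearMap.adjoint f (single i 1)) = f := by
  ext w i
  rw [analysisMap_apply, real_inner_comm, inner_adjoint_single_one]

theorem exists_linearIsometry_adjoint_single_one_iff (v : ι → E) :
    (∃ f : E →ₗᵢ[ℝ] EuclideanSpace ℝ ι, ∀ i, v i = LinearMap.adjoint f.toLinearMap (single i 1)) ↔
      ∀ w, ∑ i, ⟪w, v i⟫ ^ 2 = ‖w‖ ^ 2 := by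
  simp only [← norm_analysisMap_sq]
  constructor
  · rintro ⟨f, hf⟩ w
    obtain rfl : v = fun i => LinearMap.adjoint f.toLinearMap (single i 1) := funext hf
    rw [analysisMap_adjoint_single_one, LinearIsometry.coe_toLinearMap, f.norm_map]
  · intro h
    refine ⟨⟨analysisMap v, fun w => ?_⟩, fun i => (adjoint_analysisMap_single_one v i).symm⟩
    simpa using congrArg Real.sqrt (h w)

end EuclideanSpace

theorem stmt_6 (n m : ℕ) (s : ℝ) (hs : 0 < s) (v : Fin m → EuclideanSpace ℝ (Fin n)) :
    (∃ f : EuclideanSpace ℝ (Fin n) →ₗᵢ[ℝ] EuclideanSpace ℝ (Fin m),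
      ∀ i, v i = (LinearMap.adjoint f.toLinearMap)
        (Real.sqrt s • EuclideanSpace.single i (1 : ℝ))) ↔
    (∀ w : EuclideanSpace ℝ (Fin n), ∑ i, ⟪w, v i⟫ ^ 2 = s * ⟪w, w⟫) := by
  have hsqrt : Real.sqrt s ≠ 0 := (Real.sqrt_pos.2 hs).ne'
  have hv (f : EuclideanSpace ℝ (Fin n) →ₗ[ℝ] EuclideanSpace ℝ (Fin m)) (i : Fin m) :
      v i = LinearMap.adjoint f (Real.sqrt s • EuclideanSpace.single i 1) ↔
        (Real.sqrt s)⁻¹ • v i = LinearMap.adjoint f (EuclideanSpace.single i 1) := by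
    rw [map_smul, inv_smul_eq_iff₀ hsqrt]
  have hsum (w : EuclideanSpace ℝ (Fin n)) :
      ∑ i, ⟪w, v i⟫ ^ 2 = s * ⟪w, w⟫ ↔ ∑ i, ⟪w, (Real.sqrt s)⁻¹ • v i⟫ ^ 2 = ‖w‖ ^ 2 := by
    simp only [inner_smul_right, mul_pow, inv_pow, Real.sq_sqrt hs.le, ← Finset.mul_sum,
      real_inner_self_eq_norm_sq]
    rw [inv_mul_eq_iff_eq_mul₀ hs.ne']
  simp only [hv, hsum]
  exact EuclideanSpace.exists_linearIsometry_adjoint_single_one_iff fun i => (Real.sqrt s)⁻¹ • v i
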